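/- The principle (□-access), i.e., every instance of [t]_i□φ → □[⇓t]_iφ, is valid in every strong interpreted system I for CS satisfying: if □φ ∈ E_i(r,n,t), then φ ∈ E_i(r,n+k,⇓t) for all k ≥ 0, for all points (r,n), agents i, formulas φ, and terms t. -/

import Mathlib

/-- Justification terms. -/
inductive JTm : Type
  | const : ℕ → JTm
  | var : ℕ → JTm
  | bang : JTm → JTm
  | quest : JTm → JTm
  | plus : JTm → JTm → JTm
  | times : JTm → JTm → JTm
  | dDown : JTm → JTm   -- ⇓

/-- Formulas over h agents:
φ ::= P | ⊥ | φ→φ | ○φ | □φ | φUψ | [t]_i φ. -/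
inductive JFml (h : ℕ) : Type
  | atom : ℕ → JFml h
  | bot : JFml h
  | imp : JFml h → JFml h → JFml h
  | next : JFml h → JFml h
  | always : JFml h → JFml h
  | untl : JFml h → JFml h → JFml h
  | jbox : Fin h → JTm → JFml h → JFml h

/-- ¬φ := φ → ⊥ -/
def JFml.neg {h : ℕ} (φ : JFml h) : JFml h := φ.imp JFml.bot

/-- A run: a function from ℕ to global states, where a global state is an
(h+1)-tuple of local states (component 0 is the environment, component
i+1 the local state of agent i). -/
abbrev JRun (L : Type) (h : ℕ) := ℕ → (Fin (h + 1) → L)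

/-- (r,n) ~_i (r',n'): the local states of agent i coincide. -/
def simAg {L : Type} {h : ℕ} (i : Fin h) (r : JRun L h) (n : ℕ)
    (r' : JRun L h) (n' : ℕ) : Prop :=
  r n i.succ = r' n' i.succ

/-- An interpreted system I = (R, E, ν) for the constant specification CS,
with a CS-admissible evidence function for each agent. -/
structure IntSys (h : ℕ) (L : Type) (CS : Set (JFml h)) where
  R : Set (JRun L h)
  E : Fin h → JTm → JRun L h → ℕ → Set (JFml h)
  ν : JRun L h → ℕ → Set ℕ
  mono : ∀ (i : Fin h) (t : JTm) (r : JRun L h) (n : ℕ) (r' : JRun L h)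
    (n' : ℕ), r ∈ R → r' ∈ R → simAg i r n r' n' → E i t r n ⊆ E i t r' n'
  cs : ∀ r ∈ R, ∀ (n : ℕ) (i : Fin h) (c : ℕ) (φ : JFml h),
    JFml.jbox i (JTm.const c) φ ∈ CS → φ ∈ E i (JTm.const c) r n
  app : ∀ r ∈ R, ∀ (n : ℕ) (i : Fin h) (t s : JTm) (φ ψ : JFml h),
    φ.imp ψ ∈ E i t r n → φ ∈ E i s r n → ψ ∈ E i (t.times s) r n
  sum₁ : ∀ r ∈ R, ∀ (n : ℕ) (i : Fin h) (t s : JTm) (φ : JFml h),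
    φ ∈ E i t r n → φ ∈ E i (t.plus s) r n
  sum₂ : ∀ r ∈ R, ∀ (n : ℕ) (i : Fin h) (t s : JTm) (φ : JFml h),
    φ ∈ E i s r n → φ ∈ E i (t.plus s) r n
  posIntro : ∀ r ∈ R, ∀ (n : ℕ) (i : Fin h) (t : JTm) (φ : JFml h),
    φ ∈ E i t r n → JFml.jbox i t φ ∈ E i t.bang r n
  negIntro : ∀ r ∈ R, ∀ (n : ℕ) (i : Fin h) (t : JTm) (φ : JFml h),
    φ ∉ E i t r n → (JFml.jbox i t φ).neg ∈ E i t.quest r n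

/-- Truth of a formula at a point (r,n) of an interpreted system. -/
def Sat {h : ℕ} {L : Type} {CS : Set (JFml h)} (I : IntSys h L CS) :
    JFml h → JRun L h → ℕ → Prop
  | JFml.atom p, r, n => p ∈ I.ν r n
  | JFml.bot, _, _ => False
  | JFml.imp φ ψ, r, n => Sat I φ r n → Sat I ψ r n
  | JFml.next φ, r, n => Sat I φ r (n + 1)
  | JFml.always φ, r, n => ∀ k : ℕ, Sat I φ r (n + k)
  | JFml.untl φ ψ, r, n =>
      ∃ m : ℕ, Sat I ψ r (n + m) ∧ ∀ k ≤ m, Sat I φ r (n + k)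
  | JFml.jbox i t φ, r, n =>
      φ ∈ I.E i t r n ∧
        ∀ r' ∈ I.R, ∀ n' : ℕ, simAg i r n r' n' → Sat I φ r' n'

/-- A strong interpreted system: evidence implies truth of [t]_iφ. -/
def Strong {h : ℕ} {L : Type} {CS : Set (JFml h)} (I : IntSys h L CS) : Prop :=
  ∀ (i : Fin h) (t : JTm) (φ : JFml h), ∀ r ∈ I.R, ∀ n : ℕ,
    φ ∈ I.E i t r n → Sat I (JFml.jbox i t φ) r n

/-- (□-access): every instance of [t]_i□φ → □[⇓t]_iφ is valid in every strong
interpreted system whose evidence functions satisfy: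
□φ ∈ E_i(r,n,t) implies φ ∈ E_i(r,n+k,⇓t) for all k ≥ 0. -/
theorem boxAccess_sound {h : ℕ} {L : Type} (CS : Set (JFml h))
    (I : IntSys h L CS) (hStrong : Strong I)
    (hcond : ∀ r ∈ I.R, ∀ (n : ℕ) (i : Fin h) (φ : JFml h) (t : JTm),
      JFml.always φ ∈ I.E i t r n → ∀ k : ℕ, φ ∈ I.E i t.dDown r (n + k)) :
    ∀ r ∈ I.R, ∀ (n : ℕ) (i : Fin h) (t : JTm) (φ : JFml h),
      Sat I ((JFml.jbox i t (JFml.always φ)).imp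
        (JFml.always (JFml.jbox i t.dDown φ))) r n := by
  intro r hr n i t φ hBox k
  exact hStrong i t.dDown φ r hr (n + k) (hcond r hr n i φ t hBox.1 k)
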